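/- Let γ ∈ (0, 2s) and let v : ℝⁿ → ℝ be a measurable function such that v(x) ≤ |x|^γ for every x ∈ ℝⁿ and v(x) = |x|^γ for every x ∈ ℝⁿ ∖ B₁. Then there exists a constant C > 0, depending only on n, s, Λ and γ, such that ℐv(x) ≤ C for every x ∈ ℝⁿ ∖ B₁. -/

import Mathlib

/-! At a point `x` with `‖x‖ ≥ 1`, `v` agrees with `‖·‖^γ` and lies below it everywhere, so the
second difference of `v` at `x` is at most that of `‖·‖^γ`. With `p = γ/2 ≤ 1`, concavity of
`t ↦ t^p` and the parallelogram law give `‖x+h‖^γ + ‖x-h‖^γ ≤ 2 (‖x‖² + ‖h‖²)^p`, and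
`(‖x‖² + ‖h‖²)^p - ‖x‖^γ` is at most `‖h‖^γ` (subadditivity of `t^p`) and at most `‖h‖²` (the slope
of `t^p` on `[1, ∞)` is at most `1`). So the integrand is dominated by
`2 min(r², |r|^γ) / |r|^(1+2s)`, which is integrable on `ℝ` since `s < 1` and `γ < 2s`, and the
integral over the sphere contributes the factor `μ(S^{n-1}) ≤ Λ`. -/

open MeasureTheory

/-- The anisotropic integro-differential operator
`ℐv(x) = ∫_{S^{n-1} × ℝ} (v(x + rϑ) + v(x − rϑ) − 2v(x)) dμ(ϑ) dr / |r|^{1+2s}`. -/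
noncomputable def opI (n : ℕ) (s : ℝ)
    (μ : Measure (Metric.sphere (0 : EuclideanSpace ℝ (Fin n)) 1))
    (v : EuclideanSpace ℝ (Fin n) → ℝ) (x : EuclideanSpace ℝ (Fin n)) : ℝ :=
  ∫ p : Metric.sphere (0 : EuclideanSpace ℝ (Fin n)) 1 × ℝ,
    (v (x + p.2 • (p.1 : EuclideanSpace ℝ (Fin n))) +
      v (x - p.2 • (p.1 : EuclideanSpace ℝ (Fin n))) - 2 * v x) / |p.2| ^ (1 + 2 * s)
    ∂(μ.prod volume)

open Set

lemma rpow_add_le_rpow_add_of_one_le {u δ p : ℝ} (hu : 1 ≤ u) (hδ : 0 ≤ δ) (hp : p ≤ 1) :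
    (u + δ) ^ p ≤ u ^ p + δ := by
  have hu0 : 0 < u := one_pos.trans_le hu
  have hδu : 0 ≤ δ / u := div_nonneg hδ hu0.le
  calc (u + δ) ^ p = u ^ p * (1 + δ / u) ^ p := by
        rw [← Real.mul_rpow hu0.le (by linarith), mul_add, mul_one, mul_div_cancel₀ _ hu0.ne']
    _ ≤ u ^ p * (1 + δ / u) := by
        gcongr
        simpa only [Real.rpow_one] using Real.rpow_le_rpow_of_exponent_le (le_add_of_nonneg_right hδu) hp
    _ = u ^ p + u ^ (p - 1) * δ := by
        rw [Real.rpow_sub_one hu0.ne']; field_simp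
    _ ≤ u ^ p + δ := by
        gcongr
        exact mul_le_of_le_one_left hδ (Real.rpow_le_one_of_one_le_of_nonpos hu (by linarith))

lemma sq_rpow_half {a : ℝ} (ha : 0 ≤ a) (γ : ℝ) : (a ^ 2) ^ (γ / 2) = a ^ γ := by
  rw [← Real.rpow_natCast_mul ha]; congr 1; push_cast; ring

variable {E : Type*} [NormedAddCommGroup E] [InnerProductSpace ℝ E]

lemma norm_add_rpow_add_norm_sub_rpow_le {γ : ℝ} (hγ0 : 0 ≤ γ) (hγ2 : γ ≤ 2) (x h : E) :
    ‖x + h‖ ^ γ + ‖x - h‖ ^ γ ≤ 2 * (‖x‖ ^ 2 + ‖h‖ ^ 2) ^ (γ / 2) := by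
  have hconc := (Real.concaveOn_rpow (p := γ / 2) (by linarith) (by linarith)).2
    (mem_Ici.2 (sq_nonneg ‖x + h‖)) (mem_Ici.2 (sq_nonneg ‖x - h‖))
    (by norm_num : (0:ℝ) ≤ 1/2) (by norm_num : (0:ℝ) ≤ 1/2) (by norm_num)
  have hpar := parallelogram_law_with_norm ℝ x h
  simp only [smul_eq_mul, sq_rpow_half (norm_nonneg _)] at hconc
  have hmid : 1 / 2 * ‖x + h‖ ^ 2 + 1 / 2 * ‖x - h‖ ^ 2 = ‖x‖ ^ 2 + ‖h‖ ^ 2 := by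
    simp only [sq]; linarith
  rw [hmid] at hconc
  linarith

lemma norm_add_rpow_add_norm_sub_rpow_sub_le {γ : ℝ} (hγ0 : 0 ≤ γ) (hγ2 : γ ≤ 2) {x : E}
    (hx : 1 ≤ ‖x‖) (h : E) :
    ‖x + h‖ ^ γ + ‖x - h‖ ^ γ - 2 * ‖x‖ ^ γ ≤ 2 * min (‖h‖ ^ 2) (‖h‖ ^ γ) := by
  have hsub : (‖x‖ ^ 2 + ‖h‖ ^ 2) ^ (γ / 2) ≤ ‖x‖ ^ γ + ‖h‖ ^ γ := by
    simpa only [sq_rpow_half (norm_nonneg _)] using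
      Real.rpow_add_le_add_rpow (p := γ / 2) (sq_nonneg ‖x‖) (sq_nonneg ‖h‖) (by linarith)
        (by linarith)
  have htan : (‖x‖ ^ 2 + ‖h‖ ^ 2) ^ (γ / 2) ≤ ‖x‖ ^ γ + ‖h‖ ^ 2 := by
    simpa only [sq_rpow_half (norm_nonneg _)] using
      rpow_add_le_rpow_add_of_one_le (p := γ / 2) (one_le_pow₀ (n := 2) hx) (sq_nonneg ‖h‖)
        (by linarith)
  have := norm_add_rpow_add_norm_sub_rpow_le hγ0 hγ2 x h
  rcases min_cases (‖h‖ ^ 2) (‖h‖ ^ γ) with ⟨hmin, -⟩ | ⟨hmin, -⟩ <;> rw [hmin] <;> linarith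

noncomputable def minPowKernel (s γ t : ℝ) : ℝ := min (t ^ 2) (t ^ γ) / t ^ (1 + 2 * s)

lemma minPowKernel_nonneg (s γ : ℝ) {t : ℝ} (ht : 0 ≤ t) : 0 ≤ minPowKernel s γ t := by
  unfold minPowKernel; positivity

lemma measurable_minPowKernel (s γ : ℝ) : Measurable (minPowKernel s γ) := by
  unfold minPowKernel; fun_prop

lemma minPowKernel_le_left (s γ : ℝ) {t : ℝ} (ht : 0 < t) :
    minPowKernel s γ t ≤ t ^ (1 - 2 * s) := by
  calc minPowKernel s γ t ≤ t ^ 2 / t ^ (1 + 2 * s) := by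
        unfold minPowKernel; gcongr; exact min_le_left _ _
    _ = t ^ (1 - 2 * s) := by
        rw [← Real.rpow_natCast, ← Real.rpow_sub ht]; norm_num; ring_nf

lemma minPowKernel_le_right (s γ : ℝ) {t : ℝ} (ht : 0 < t) :
    minPowKernel s γ t ≤ t ^ (γ - 1 - 2 * s) := by
  calc minPowKernel s γ t ≤ t ^ γ / t ^ (1 + 2 * s) := by
        unfold minPowKernel; gcongr; exact min_le_right _ _
    _ = t ^ (γ - 1 - 2 * s) := by
        rw [← Real.rpow_sub ht]; ring_nf

lemma integrableOn_minPowKernel_Ioi {s γ : ℝ} (hs : s < 1) (hγ : γ < 2 * s) :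
    IntegrableOn (minPowKernel s γ) (Ioi 0) := by
  have hmeas : AEStronglyMeasurable (minPowKernel s γ) :=
    (measurable_minPowKernel s γ).aestronglyMeasurable
  rw [← Ioc_union_Ioi_eq_Ioi zero_le_one]
  refine IntegrableOn.union ?_ ?_
  · have hpow : IntegrableOn (fun t : ℝ ↦ t ^ (1 - 2 * s)) (Ioc 0 1) := by
      rw [← intervalIntegrable_iff_integrableOn_Ioc_of_le zero_le_one]
      exact intervalIntegral.intervalIntegrable_rpow' (by linarith)
    refine hpow.mono' hmeas.restrict ?_
    filter_upwards [ae_restrict_mem measurableSet_Ioc] with t ht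
    rw [Real.norm_of_nonneg (minPowKernel_nonneg s γ ht.1.le)]
    exact minPowKernel_le_left s γ ht.1
  · have hpow : IntegrableOn (fun t : ℝ ↦ t ^ (γ - 1 - 2 * s)) (Ioi 1) :=
      integrableOn_Ioi_rpow_of_lt (by linarith) one_pos
    refine hpow.mono' hmeas.restrict ?_
    filter_upwards [ae_restrict_mem measurableSet_Ioi] with t (ht : 1 < t)
    rw [Real.norm_of_nonneg (minPowKernel_nonneg s γ (by linarith))]
    exact minPowKernel_le_right s γ (by linarith)

lemma integrable_comp_abs_of_integrableOn_Ioi {F : Type*} [NormedAddCommGroup F] {f : ℝ → F}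
    (hf : IntegrableOn f (Ioi 0)) : Integrable (fun r ↦ f |r|) := by
  have hIci : IntegrableOn f (Ici 0) := (integrableOn_Ici_iff_integrableOn_Ioi).mpr hf
  rw [← integrableOn_univ, ← Iic_union_Ici (a := (0 : ℝ))]
  refine IntegrableOn.union ?_ ?_
  · refine (IntegrableOn.comp_neg_Iic (c := 0) (by rwa [neg_zero])).congr_fun
      (fun r (hr : r ≤ 0) ↦ by rw [abs_of_nonpos hr]) measurableSet_Iic
  · exact hIci.congr_fun (fun r (hr : 0 ≤ r) ↦ by rw [abs_of_nonneg hr]) measurableSet_Ici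

lemma integral_le_of_lintegral_ofReal_le {α : Type*} [MeasurableSpace α] {μ : Measure α}
    {f : α → ℝ} {C : ℝ} (hC : 0 ≤ C) (h : ∫⁻ a, ENNReal.ofReal (f a) ∂μ ≤ ENNReal.ofReal C) :
    ∫ a, f a ∂μ ≤ C := by
  by_cases hf : Integrable f μ
  · rw [integral_eq_lintegral_pos_part_sub_lintegral_neg_part hf]
    have := ENNReal.toReal_mono ENNReal.ofReal_ne_top h
    rw [ENNReal.toReal_ofReal hC] at this
    linarith [ENNReal.toReal_nonneg (a := ∫⁻ a, ENNReal.ofReal (-f a) ∂μ)]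
  · rwa [integral_undef hf]

lemma integral_prod_le_mul_integral_of_le_comp_snd {α β : Type*} [MeasurableSpace α]
    [MeasurableSpace β] {μ : Measure α} {ν : Measure β} [SFinite ν] {Λ : ℝ} (hΛ : 0 ≤ Λ)
    (hμ : μ univ ≤ ENNReal.ofReal Λ) {f : α × β → ℝ} {g : β → ℝ} (hg : Integrable g ν)
    (hg0 : 0 ≤ g) (hfg : ∀ p, f p ≤ g p.2) :
    ∫ p, f p ∂μ.prod ν ≤ Λ * ∫ b, g b ∂ν := by
  refine integral_le_of_lintegral_ofReal_le (mul_nonneg hΛ (integral_nonneg hg0)) ?_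
  calc ∫⁻ p, ENNReal.ofReal (f p) ∂μ.prod ν ≤ ∫⁻ p, ENNReal.ofReal (g p.2) ∂μ.prod ν :=
        lintegral_mono fun p ↦ ENNReal.ofReal_le_ofReal (hfg p)
    _ = μ univ * ∫⁻ b, ENNReal.ofReal (g b) ∂ν := by
        rw [lintegral_prod _ hg.aemeasurable.ennreal_ofReal.comp_snd,
          lintegral_const (c := ∫⁻ b, ENNReal.ofReal (g b) ∂ν), mul_comm]
    _ ≤ ENNReal.ofReal Λ * ENNReal.ofReal (∫ b, g b ∂ν) := by
        rw [ofReal_integral_eq_lintegral_ofReal hg (Filter.Eventually.of_forall hg0)]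
        gcongr
    _ = ENNReal.ofReal (Λ * ∫ b, g b ∂ν) := (ENNReal.ofReal_mul hΛ).symm

lemma second_diff_div_le_minPowKernel {s γ : ℝ} (hγ0 : 0 ≤ γ) (hγ2 : γ ≤ 2) {v : E → ℝ}
    (hv_le : ∀ y, v y ≤ ‖y‖ ^ γ) {x : E} (hx : 1 ≤ ‖x‖) (hvx : v x = ‖x‖ ^ γ) {θ : E}
    (hθ : ‖θ‖ = 1) (r : ℝ) :
    (v (x + r • θ) + v (x - r • θ) - 2 * v x) / |r| ^ (1 + 2 * s) ≤
      2 * minPowKernel s γ |r| := by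
  have hnorm : ‖r • θ‖ = |r| := by rw [norm_smul, hθ, mul_one, Real.norm_eq_abs]
  have hdiff := norm_add_rpow_add_norm_sub_rpow_sub_le hγ0 hγ2 hx (r • θ)
  rw [hnorm] at hdiff
  rw [minPowKernel, ← mul_div_assoc]
  gcongr
  linarith [hv_le (x + r • θ), hv_le (x - r • θ)]

theorem opI_bound_far_from_origin_general
    (n : ℕ) (s : ℝ) (hs : s ∈ Set.Ioo (0 : ℝ) 1)
    (μ : Measure (Metric.sphere (0 : EuclideanSpace ℝ (Fin n)) 1))
    (Λ : ℝ) (hΛ : 0 < Λ) (hμΛ : μ Set.univ ≤ ENNReal.ofReal Λ)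
    (γ : ℝ) (hγ : γ ∈ Set.Ioo (0 : ℝ) (2 * s))
    (v : EuclideanSpace ℝ (Fin n) → ℝ)
    (hv_le : ∀ x, v x ≤ ‖x‖ ^ γ)
    (hv_eq : ∀ x : EuclideanSpace ℝ (Fin n), 1 ≤ ‖x‖ → v x = ‖x‖ ^ γ) :
    ∃ C : ℝ, 0 < C ∧
      ∀ x : EuclideanSpace ℝ (Fin n), 1 ≤ ‖x‖ → opI n s μ v x ≤ C := by
  obtain ⟨-, hs1⟩ := hs
  obtain ⟨hγ0, hγ2s⟩ := hγ
  set k : ℝ → ℝ := fun r ↦ 2 * minPowKernel s γ |r|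
  have hk : Integrable k :=
    (integrable_comp_abs_of_integrableOn_Ioi (integrableOn_minPowKernel_Ioi hs1 hγ2s)).const_mul 2
  have hk0 : 0 ≤ k := fun r ↦ mul_nonneg zero_le_two (minPowKernel_nonneg s γ (abs_nonneg r))
  have hK : 0 ≤ ∫ r, k r := integral_nonneg hk0
  refine ⟨Λ * (∫ r, k r) + 1, by positivity, fun x hx ↦ ?_⟩
  have hbound := integral_prod_le_mul_integral_of_le_comp_snd hΛ.le hμΛ hk hk0 fun p ↦
    second_diff_div_le_minPowKernel hγ0.le (by linarith) hv_le hx (hv_eq x hx)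
      (norm_eq_of_mem_sphere p.1) p.2
  rw [opI]
  linarith

/-- If `v ≤ |·|^γ` on `ℝⁿ` and `v = |·|^γ` outside `B₁`, with `γ ∈ (0,2s)`, then
`ℐ v ≤ C` outside `B₁`, with `C` depending only on `n`, `s`, `Λ` and `γ`. -/
theorem opI_bound_far_from_origin
    (n : ℕ) (hn : 1 ≤ n) (s : ℝ) (hs : s ∈ Set.Ioo (0 : ℝ) 1)
    (μ : Measure (Metric.sphere (0 : EuclideanSpace ℝ (Fin n)) 1)) [IsFiniteMeasure μ]
    (Λ : ℝ) (hΛ : 0 < Λ) (hμΛ : μ Set.univ ≤ ENNReal.ofReal Λ)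
    (γ : ℝ) (hγ : γ ∈ Set.Ioo (0 : ℝ) (2 * s))
    (v : EuclideanSpace ℝ (Fin n) → ℝ) (hv_meas : Measurable v)
    (hv_le : ∀ x, v x ≤ ‖x‖ ^ γ)
    (hv_eq : ∀ x : EuclideanSpace ℝ (Fin n), 1 ≤ ‖x‖ → v x = ‖x‖ ^ γ) :
    ∃ C : ℝ, 0 < C ∧
      ∀ x : EuclideanSpace ℝ (Fin n), 1 ≤ ‖x‖ → opI n s μ v x ≤ C :=
  opI_bound_far_from_origin_general n s hs μ Λ hΛ hμΛ γ hγ v hv_le hv_eq
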